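/- arXiv:2209.13576 — 9 statements merged into one kernel-verified Lean document; each statement's English description precedes it below -/
import Mathlib

section
/- The function φ : ℝ → [0,∞) defined by φ(t) := Σ_{k=1}^∞ sin²(πt/2^k) is Lipschitz continuous with Lipschitz constant π, i.e. |φ(x) − φ(y)| ≤ π|x − y| for all x, y ∈ ℝ. -/
/-! Since `sin² a = (1 - cos 2a) / 2` and `cos` is `1`-Lipschitz, `sin²` is `1`-Lipschitz. The `k`-th
term of `φ` is therefore `π / 2^(k+1)`-Lipschitz, and these constants sum to `π`. -/

open Real Filter Topology

/-- The function `φ(t) = ∑_{k=1}^∞ sin²(π t / 2^k)`. -/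
noncomputable def levitanPhi (t : ℝ) : ℝ :=
  ∑' k : ℕ, Real.sin (Real.pi * t / 2 ^ (k + 1)) ^ 2

theorem abs_sin_sq_sub_sin_sq_le (a b : ℝ) : |sin a ^ 2 - sin b ^ 2| ≤ |a - b| :=
  calc |sin a ^ 2 - sin b ^ 2| = |cos (2 * b) - cos (2 * a)| / 2 := by
        rw [sin_sq_eq_half_sub, sin_sq_eq_half_sub, ← abs_two, ← abs_div]; congr 1; ring
    _ ≤ |2 * b - 2 * a| / 2 := by gcongr ?_ / 2; exact abs_cos_sub_cos_le _ _
    _ = |a - b| := by rw [← mul_sub, abs_mul, abs_two, abs_sub_comm]; ring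

theorem abs_levitanPhi_term_sub_le (k : ℕ) (x y : ℝ) :
    |sin (π * x / 2 ^ (k + 1)) ^ 2 - sin (π * y / 2 ^ (k + 1)) ^ 2| ≤ π * |x - y| / 2 / 2 ^ k := by
  refine (abs_sin_sq_sub_sin_sq_le _ _).trans_eq ?_
  rw [← sub_div, ← mul_sub, abs_div, abs_mul, abs_of_pos pi_pos,
    abs_of_pos (by positivity : (0 : ℝ) < 2 ^ (k + 1)), pow_succ, div_div, mul_comm (2 ^ k : ℝ)]

theorem summable_levitanPhi_term (t : ℝ) : Summable fun k : ℕ ↦ sin (π * t / 2 ^ (k + 1)) ^ 2 :=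
  (summable_geometric_two' (π * |t|)).of_norm_bounded fun k ↦ by
    simpa using abs_levitanPhi_term_sub_le k t 0

/-- `φ` is Lipschitz continuous with Lipschitz constant `π`. -/
theorem stmt0 (x y : ℝ) : |levitanPhi x - levitanPhi y| ≤ Real.pi * |x - y| := by
  rw [levitanPhi, levitanPhi, ← (summable_levitanPhi_term x).tsum_sub (summable_levitanPhi_term y)]
  exact tsum_of_norm_bounded (hasSum_geometric_two' _) fun k ↦
    (norm_eq_abs _).trans_le (abs_levitanPhi_term_sub_le k x y)
end

section
/- For the function φ(t) := Σ_{k=1}^∞ sin²(πt/2^k), the limits lim_{l→∞} φ(t + 2^l) = φ(t) + φ(1) and lim_{l→∞} φ(t − 2^l) = φ(t) + φ(1) hold uniformly on every compact subset of ℝ; that is, for every compact K ⊆ ℝ, sup_{t∈K} |φ(t ± 2^l) − φ(t) − φ(1)| → 0 as l → ∞. -/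
/-!
Shifting `t` by `s * 2 ^ l` with `s ∈ ℤ` moves the arguments of the first `l` terms of `φ` by
integer multiples of `π`, so those terms do not change. In the `j`-th remaining term the shift adds
`π s / 2 ^ (j + 1)`, the argument of the `j`-th term of `φ(s)`, and the identity
`sin² (a + b) - sin² a - sin² b = 2 sin a sin b cos (a + b)` bounds the defect by `2 |a|` with
`a = π t / 2 ^ (l + j + 1)`. Summing, `|φ(t + s 2 ^ l) - φ(t) - φ(s)| ≤ 2 π |t| / 2 ^ l`.
-/

open Real Filter Topology

noncomputable def levitanPhiTerm (x : ℝ) (k : ℕ) : ℝ :=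
  sin (π * x / 2 ^ (k + 1)) ^ 2

theorem sin_add_sq_sub_sin_sq_sub_sin_sq (a b : ℝ) :
    sin (a + b) ^ 2 - sin a ^ 2 - sin b ^ 2 = 2 * sin a * sin b * cos (a + b) := by
  rw [sin_add, cos_add]
  linear_combination sin a ^ 2 * sin_sq_add_cos_sq b + sin b ^ 2 * sin_sq_add_cos_sq a

theorem abs_sin_add_sq_sub_sin_sq_sub_sin_sq_le (a b : ℝ) :
    |sin (a + b) ^ 2 - sin a ^ 2 - sin b ^ 2| ≤ 2 * |a| := by
  rw [sin_add_sq_sub_sin_sq_sub_sin_sq, abs_mul, abs_mul, abs_mul, abs_two]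
  have hsin_a : |sin a| ≤ |a| := abs_sin_le_abs
  have hsin_b : |sin b| ≤ 1 := abs_sin_le_one b
  have hcos : |cos (a + b)| ≤ 1 := abs_cos_le_one _
  calc 2 * |sin a| * |sin b| * |cos (a + b)| ≤ 2 * |a| * 1 * 1 := by gcongr
    _ = 2 * |a| := by ring

theorem sin_sq_add_int_mul_pi (x : ℝ) (n : ℤ) : sin (x + n * π) ^ 2 = sin x ^ 2 := by
  rw [sin_add_int_mul_pi, mul_pow, ← zpow_natCast, ← zpow_mul,
    Even.neg_one_zpow ⟨n, by push_cast; ring⟩, one_mul]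

theorem levitanPhiTerm_le (x : ℝ) (k : ℕ) : levitanPhiTerm x k ≤ π * |x| / 2 / 2 ^ k := by
  have hsin : |sin (π * x / 2 ^ (k + 1))| ≤ π * |x| / 2 / 2 ^ k := by
    refine abs_sin_le_abs.trans_eq ?_
    rw [abs_div, abs_mul, abs_of_pos pi_pos, abs_pow, abs_two, pow_succ]
    ring
  calc levitanPhiTerm x k = |sin (π * x / 2 ^ (k + 1))| ^ 2 := (sq_abs _).symm
    _ ≤ |sin (π * x / 2 ^ (k + 1))| :=
        pow_le_of_le_one (abs_nonneg _) (abs_sin_le_one _) two_ne_zero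
    _ ≤ π * |x| / 2 / 2 ^ k := hsin

theorem summable_levitanPhiTerm (x : ℝ) : Summable (levitanPhiTerm x) :=
  (summable_geometric_two' _).of_nonneg_of_le (fun _ => sq_nonneg _) (levitanPhiTerm_le x)

theorem levitanPhi_eq_tsum (x : ℝ) : levitanPhi x = ∑' k, levitanPhiTerm x k := rfl

theorem levitanPhiTerm_add_int_mul_two_pow_of_lt (x : ℝ) (s : ℤ) {k l : ℕ} (hkl : k < l) :
    levitanPhiTerm (x + s * 2 ^ l) k = levitanPhiTerm x k := by
  obtain ⟨m, rfl⟩ := Nat.exists_eq_add_of_lt hkl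
  have harg : π * (x + s * 2 ^ (k + m + 1)) / 2 ^ (k + 1) =
      π * x / 2 ^ (k + 1) + ((s * 2 ^ m : ℤ) : ℝ) * π := by
    push_cast
    field_simp
    ring
  rw [levitanPhiTerm, harg, sin_sq_add_int_mul_pi, levitanPhiTerm]

theorem abs_levitanPhiTerm_add_int_mul_two_pow_sub_le (x : ℝ) (s : ℤ) (l j : ℕ) :
    |levitanPhiTerm (x + s * 2 ^ l) (j + l) - levitanPhiTerm x (j + l) - levitanPhiTerm s j| ≤
      2 * π * |x| / 2 ^ l / 2 / 2 ^ j := by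
  have harg : π * (x + s * 2 ^ l) / 2 ^ (j + l + 1) =
      π * x / 2 ^ (j + l + 1) + π * s / 2 ^ (j + 1) := by
    rw [pow_add, pow_add]
    field_simp
    ring
  rw [levitanPhiTerm, harg]
  refine (abs_sin_add_sq_sub_sin_sq_sub_sin_sq_le _ _).trans_eq ?_
  rw [abs_div, abs_mul, abs_of_pos pi_pos, abs_pow, abs_two, pow_succ, pow_add]
  field_simp

theorem levitanPhi_add_int_mul_two_pow_sub (x : ℝ) (s : ℤ) (l : ℕ) :
    levitanPhi (x + s * 2 ^ l) - levitanPhi x - levitanPhi s =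
      ∑' j, (levitanPhiTerm (x + s * 2 ^ l) (j + l) - levitanPhiTerm x (j + l) -
        levitanPhiTerm s j) := by
  have hshift := summable_levitanPhiTerm (x + s * 2 ^ l)
  have hx := summable_levitanPhiTerm x
  rw [Summable.tsum_sub (((summable_nat_add_iff l).2 hshift).sub ((summable_nat_add_iff l).2 hx))
      (summable_levitanPhiTerm s),
    Summable.tsum_sub ((summable_nat_add_iff l).2 hshift) ((summable_nat_add_iff l).2 hx),
    levitanPhi_eq_tsum, levitanPhi_eq_tsum, levitanPhi_eq_tsum,
    ← hshift.sum_add_tsum_nat_add l, ← hx.sum_add_tsum_nat_add l,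
    Finset.sum_congr rfl fun k hk =>
      levitanPhiTerm_add_int_mul_two_pow_of_lt x s (Finset.mem_range.1 hk)]
  ring

theorem abs_levitanPhi_add_int_mul_two_pow_sub_le (x : ℝ) (s : ℤ) (l : ℕ) :
    |levitanPhi (x + s * 2 ^ l) - levitanPhi x - levitanPhi s| ≤ 2 * π * |x| / 2 ^ l := by
  rw [levitanPhi_add_int_mul_two_pow_sub]
  exact tsum_of_norm_bounded (hasSum_geometric_two' _) fun j =>
    (Real.norm_eq_abs _).trans_le (abs_levitanPhiTerm_add_int_mul_two_pow_sub_le x s l j)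

theorem tendstoUniformlyOn_levitanPhi_add_int_mul_two_pow (s : ℤ) {K : Set ℝ}
    (hK : Bornology.IsBounded K) :
    TendstoUniformlyOn (fun (l : ℕ) (t : ℝ) => levitanPhi (t + s * 2 ^ l))
      (fun t => levitanPhi t + levitanPhi s) atTop K := by
  obtain ⟨M, hM⟩ := hK.exists_norm_le
  have hlim : Tendsto (fun l : ℕ => 2 * π * M / 2 ^ l) atTop (𝓝 0) :=
    tendsto_const_nhds.div_atTop (tendsto_pow_atTop_atTop_of_one_lt one_lt_two)
  rw [Metric.tendstoUniformlyOn_iff]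
  intro δ hδ
  filter_upwards [hlim.eventually_lt_const hδ] with l hl t ht
  calc dist (levitanPhi t + levitanPhi s) (levitanPhi (t + s * 2 ^ l))
      = |levitanPhi (t + s * 2 ^ l) - levitanPhi t - levitanPhi s| := by
        rw [dist_comm, Real.dist_eq, sub_sub]
    _ ≤ 2 * π * |t| / 2 ^ l := abs_levitanPhi_add_int_mul_two_pow_sub_le t s l
    _ ≤ 2 * π * M / 2 ^ l := by gcongr; exact hM t ht
    _ < δ := hl

theorem levitanPhi_neg (x : ℝ) : levitanPhi (-x) = levitanPhi x := by
  simp only [levitanPhi, mul_neg, neg_div, sin_neg, neg_sq]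

/-- `φ(t ± 2^l) → φ(t) + φ(1)` as `l → ∞`, uniformly on every compact subset of `ℝ`. -/
theorem stmt1 (K : Set ℝ) (hK : IsCompact K) :
    TendstoUniformlyOn (fun (l : ℕ) (t : ℝ) => levitanPhi (t + 2 ^ l))
      (fun t => levitanPhi t + levitanPhi 1) atTop K ∧
    TendstoUniformlyOn (fun (l : ℕ) (t : ℝ) => levitanPhi (t - 2 ^ l))
      (fun t => levitanPhi t + levitanPhi 1) atTop K := by
  constructor
  · simpa using tendstoUniformlyOn_levitanPhi_add_int_mul_two_pow 1 hK.isBounded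
  · simpa [← sub_eq_add_neg, levitanPhi_neg] using
      tendstoUniformlyOn_levitanPhi_add_int_mul_two_pow (-1) hK.isBounded
end

section
/- Let c ∈ ℂ and let p : ℝ → ℂ be any continuous function satisfying p(t + φ(1)) = c·p(t) for all t ∈ ℝ, where φ(t) := Σ_{k=1}^∞ sin²(πt/2^k). Then lim_{l→∞} (p∘φ)(t + 2^l) = c·(p∘φ)(t) uniformly on compact subsets of ℝ, i.e. for every compact K ⊆ ℝ, sup_{t∈K} |p(φ(t + 2^l)) − c·p(φ(t))| → 0 as l → ∞. In particular, the sequence (2^l) witnesses that p∘φ is uniformly Poisson c-stable. -/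
open Real Filter Topology

lemma levitan_term_le (t : ℝ) (k : ℕ) :
    Real.sin (Real.pi * t / 2 ^ (k + 1)) ^ 2 ≤ (Real.pi * t) ^ 2 * (1/4 : ℝ) ^ k / 4 := by
  have h := Real.sin_sq_le_sq (x := Real.pi * t / 2 ^ (k + 1))
  have hpow : ((2:ℝ) ^ (k+1)) ^ 2 = 4 * 4 ^ k := by
    rw [← pow_mul, mul_comm (k+1) 2, pow_mul]
    norm_num [pow_succ, mul_comm]
  have h2 : (Real.pi * t / 2 ^ (k + 1)) ^ 2 = (Real.pi * t) ^ 2 * (1/4 : ℝ) ^ k / 4 := by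
    rw [div_pow, hpow, div_pow, one_pow]
    ring
  have h3 : (0:ℝ) ≤ (Real.pi * t) ^ 2 * (1/4 : ℝ) ^ k / 4 := by positivity
  nlinarith

lemma levitan_summable (t : ℝ) :
    Summable fun k : ℕ => Real.sin (Real.pi * t / 2 ^ (k + 1)) ^ 2 :=
  Summable.of_nonneg_of_le (fun _ => sq_nonneg _) (levitan_term_le t)
    (((summable_geometric_of_lt_one (by norm_num) (by norm_num)).mul_left _).div_const 4)

lemma levitan_nonneg (t : ℝ) : 0 ≤ levitanPhi t :=
  tsum_nonneg fun k => sq_nonneg _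

lemma levitan_le_sq (t : ℝ) : levitanPhi t ≤ (Real.pi * t) ^ 2 := by
  have h1 : levitanPhi t ≤ ∑' k : ℕ, (Real.pi * t) ^ 2 * (1/4 : ℝ) ^ k / 4 :=
    Summable.tsum_le_tsum (levitan_term_le t) (levitan_summable t)
      (((summable_geometric_of_lt_one (by norm_num) (by norm_num)).mul_left _).div_const 4)
  rw [tsum_div_const, tsum_mul_left, tsum_geometric_of_lt_one (by norm_num) (by norm_num)] at h1
  norm_num at h1
  nlinarith [sq_nonneg (Real.pi * t)]

lemma sin_sq_add_nat_mul_pi (x : ℝ) (n : ℕ) :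
    Real.sin (x + n * Real.pi) ^ 2 = Real.sin x ^ 2 := by
  induction n with
  | zero => simp
  | succ n ih =>
    have : x + (n + 1 : ℕ) * Real.pi = (x + n * Real.pi) + Real.pi := by push_cast; ring
    rw [this, Real.sin_add_pi, neg_sq, ih]

lemma abs_sin_sq_sub_sin_sq (x y : ℝ) :
    |Real.sin x ^ 2 - Real.sin y ^ 2| ≤ 2 * |x - y| := by
  have h1 : |Real.sin x - Real.sin y| ≤ |x - y| := by
    rw [Real.sin_sub_sin]
    calc |2 * Real.sin ((x - y) / 2) * Real.cos ((x + y) / 2)|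
        = 2 * |Real.sin ((x - y) / 2)| * |Real.cos ((x + y) / 2)| := by
          rw [abs_mul, abs_mul]; norm_num
    _ ≤ 2 * |(x - y) / 2| * 1 := by
        apply mul_le_mul _ (Real.abs_cos_le_one _) (abs_nonneg _) (by positivity)
        exact mul_le_mul_of_nonneg_left Real.abs_sin_le_abs (by norm_num)
    _ = |x - y| := by rw [abs_div, mul_one, abs_two]; ring
  have h2 : |Real.sin x + Real.sin y| ≤ 2 := by
    calc |Real.sin x + Real.sin y| ≤ |Real.sin x| + |Real.sin y| := abs_add_le _ _
    _ ≤ 1 + 1 := add_le_add (Real.abs_sin_le_one x) (Real.abs_sin_le_one y)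
    _ = 2 := by norm_num
  calc |Real.sin x ^ 2 - Real.sin y ^ 2|
      = |Real.sin x - Real.sin y| * |Real.sin x + Real.sin y| := by
        rw [← abs_mul]; ring_nf
  _ ≤ |x - y| * 2 := mul_le_mul h1 h2 (abs_nonneg _) (abs_nonneg _)
  _ = 2 * |x - y| := by ring

set_option maxHeartbeats 1000000 in
/-- Key estimate: `|φ(t + 2^l) - φ(t) - φ(1)| ≤ (2 + π|t|) · π|t| / 2^l`. -/
lemma levitan_shift (t : ℝ) (l : ℕ) :
    |levitanPhi (t + 2 ^ l) - levitanPhi t - levitanPhi 1|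
      ≤ (2 + Real.pi * |t|) * (Real.pi * |t|) / 2 ^ l := by
  have hab : ∀ j : ℕ, Real.pi * (t + 2 ^ l) / 2 ^ (j + l + 1)
      = Real.pi * t / 2 ^ (j + l + 1) + Real.pi / 2 ^ (j + 1) := by
    intro j
    have h2 : (2:ℝ) ^ (j + 1) * 2 ^ l = 2 ^ (j + l + 1) := by
      rw [← pow_add]; congr 1; omega
    have hne : ((2:ℝ) ^ (j + l + 1)) ≠ 0 := by positivity
    have hne2 : ((2:ℝ) ^ (j + 1)) ≠ 0 := by positivity
    field_simp [← h2]
    ring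
  -- split the three sums at index l
  have hsplit1 : levitanPhi (t + 2 ^ l) =
      (∑ k ∈ Finset.range l, Real.sin (Real.pi * t / 2 ^ (k + 1)) ^ 2)
        + ∑' j : ℕ, Real.sin (Real.pi * t / 2 ^ (j + l + 1) + Real.pi / 2 ^ (j + 1)) ^ 2 := by
    rw [levitanPhi, ← Summable.sum_add_tsum_nat_add l (levitan_summable (t + 2 ^ l))]
    congr 1
    · apply Finset.sum_congr rfl
      intro k hk
      have hk' := Finset.mem_range.1 hk
      obtain ⟨m, rfl⟩ : ∃ m, l = k + 1 + m := ⟨l - k - 1, by omega⟩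
      have hpow : (2:ℝ) ^ (k + 1 + m) = 2 ^ (k + 1) * 2 ^ m := pow_add 2 (k+1) m
      have hne : ((2:ℝ) ^ (k + 1)) ≠ 0 := by positivity
      have harg : Real.pi * (t + 2 ^ (k + 1 + m)) / 2 ^ (k + 1)
          = Real.pi * t / 2 ^ (k + 1) + ((2:ℕ) ^ m : ℕ) * Real.pi := by
        push_cast
        rw [hpow]
        field_simp
      rw [harg, sin_sq_add_nat_mul_pi]
    · exact tsum_congr fun j => by rw [hab j]
  have hsplit2 : levitanPhi t =
      (∑ k ∈ Finset.range l, Real.sin (Real.pi * t / 2 ^ (k + 1)) ^ 2)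
        + ∑' j : ℕ, Real.sin (Real.pi * t / 2 ^ (j + l + 1)) ^ 2 := by
    rw [levitanPhi, ← Summable.sum_add_tsum_nat_add l (levitan_summable t)]
  have hsplit3 : levitanPhi 1 = ∑' j : ℕ, Real.sin (Real.pi / 2 ^ (j + 1)) ^ 2 := by
    rw [levitanPhi]
    exact tsum_congr fun j => by rw [mul_one]
  -- summability of the three tails
  have hs1 : Summable fun j : ℕ =>
      Real.sin (Real.pi * t / 2 ^ (j + l + 1) + Real.pi / 2 ^ (j + 1)) ^ 2 := by
    have := (summable_nat_add_iff l).2 (levitan_summable (t + 2 ^ l))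
    simpa only [hab] using this
  have hs2 : Summable fun j : ℕ => Real.sin (Real.pi * t / 2 ^ (j + l + 1)) ^ 2 :=
    (summable_nat_add_iff l).2 (levitan_summable t)
  have hs3 : Summable fun j : ℕ => Real.sin (Real.pi / 2 ^ (j + 1)) ^ 2 := by
    simpa using levitan_summable 1
  set d : ℕ → ℝ := fun j =>
    Real.sin (Real.pi * t / 2 ^ (j + l + 1) + Real.pi / 2 ^ (j + 1)) ^ 2
      - Real.sin (Real.pi * t / 2 ^ (j + l + 1)) ^ 2
      - Real.sin (Real.pi / 2 ^ (j + 1)) ^ 2 with hd_def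
  have hds : Summable d := (hs1.sub hs2).sub hs3
  have key : levitanPhi (t + 2 ^ l) - levitanPhi t - levitanPhi 1 = ∑' j, d j := by
    rw [hsplit1, hsplit2, hsplit3, hd_def]
    rw [Summable.tsum_sub (hs1.sub hs2) hs3, Summable.tsum_sub hs1 hs2]
    ring
  -- per-term bound
  set C : ℝ := (2 + Real.pi * |t|) * (Real.pi * |t|) / 2 ^ (l + 1) with hC_def
  have hC0 : 0 ≤ C := by positivity
  have habs_a : ∀ j : ℕ, |Real.pi * t / 2 ^ (j + l + 1)|
      = Real.pi * |t| / 2 ^ (j + l + 1) := by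
    intro j
    rw [abs_div, abs_mul, abs_of_pos Real.pi_pos, abs_of_pos (by positivity : (0:ℝ) < 2 ^ (j+l+1))]
  have hbound : ∀ j : ℕ, |d j| ≤ C * (1/2 : ℝ) ^ j := by
    intro j
    set A := Real.pi * t / 2 ^ (j + l + 1) with hA_def
    set B := Real.pi / 2 ^ (j + 1) with hB_def
    have e1 : |d j| ≤ |Real.sin (A + B) ^ 2 - Real.sin B ^ 2| + Real.sin A ^ 2 := by
      have : d j = (Real.sin (A + B) ^ 2 - Real.sin B ^ 2) - Real.sin A ^ 2 := by
        simp only [hd_def]; ring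
      rw [this]
      calc |(Real.sin (A + B) ^ 2 - Real.sin B ^ 2) - Real.sin A ^ 2|
          ≤ |Real.sin (A + B) ^ 2 - Real.sin B ^ 2| + |Real.sin A ^ 2| := abs_sub _ _
      _ = |Real.sin (A + B) ^ 2 - Real.sin B ^ 2| + Real.sin A ^ 2 := by
          rw [abs_of_nonneg (sq_nonneg (Real.sin A))]
    have e2 : |Real.sin (A + B) ^ 2 - Real.sin B ^ 2| ≤ 2 * |A| := by
      have := abs_sin_sq_sub_sin_sq (A + B) B
      simpa using this
    have e3 : Real.sin A ^ 2 ≤ |A| ^ 2 := by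
      rw [sq_abs]; exact Real.sin_sq_le_sq
    have e4 : |A| = (Real.pi * |t| / 2 ^ (l + 1)) * (1/2 : ℝ) ^ j := by
      rw [hA_def, habs_a j]
      have h2 : (2:ℝ) ^ (j + l + 1) = 2 ^ (l + 1) * 2 ^ j := by
        rw [← pow_add]; congr 1; omega
      rw [h2, div_pow, one_pow]
      have hne : ((2:ℝ) ^ (l + 1)) ≠ 0 := by positivity
      have hne2 : ((2:ℝ) ^ j) ≠ 0 := by positivity
      field_simp
    have e5 : |A| ≤ Real.pi * |t| := by
      rw [e4]
      have h1 : (1/2 : ℝ) ^ j ≤ 1 := pow_le_one₀ (by norm_num) (by norm_num)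
      have h2 : (1:ℝ) ≤ 2 ^ (l + 1) := one_le_pow₀ (by norm_num)
      have h3 : Real.pi * |t| / 2 ^ (l + 1) ≤ Real.pi * |t| := by
        apply div_le_self (by positivity) h2
      calc Real.pi * |t| / 2 ^ (l + 1) * (1/2:ℝ) ^ j
          ≤ Real.pi * |t| / 2 ^ (l + 1) * 1 := by
            exact mul_le_mul_of_nonneg_left h1 (by positivity)
      _ = Real.pi * |t| / 2 ^ (l + 1) := mul_one _
      _ ≤ Real.pi * |t| := h3
    have : |d j| ≤ (2 + Real.pi * |t|) * |A| := by nlinarith [abs_nonneg A]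
    calc |d j| ≤ (2 + Real.pi * |t|) * |A| := this
    _ = C * (1/2:ℝ) ^ j := by rw [e4, hC_def]; ring
  -- sum the bounds
  have hgeom : Summable fun j : ℕ => C * (1/2 : ℝ) ^ j :=
    (summable_geometric_of_lt_one (by norm_num) (by norm_num)).mul_left _
  have h1 : |∑' j, d j| ≤ ∑' j, |d j| := by
    have := norm_tsum_le_tsum_norm (f := d) (by simpa [Real.norm_eq_abs] using hds.abs)
    simpa [Real.norm_eq_abs] using this
  have h2 : ∑' j, |d j| ≤ ∑' j, C * (1/2 : ℝ) ^ j :=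
    Summable.tsum_le_tsum hbound hds.abs hgeom
  have h3 : ∑' j, C * (1/2 : ℝ) ^ j = C * 2 := by
    rw [tsum_mul_left, tsum_geometric_of_lt_one (by norm_num) (by norm_num)]
    norm_num
  have h4 : C * 2 = (2 + Real.pi * |t|) * (Real.pi * |t|) / 2 ^ l := by
    rw [hC_def, pow_succ]
    have hne : ((2:ℝ) ^ l) ≠ 0 := by positivity
    field_simp
  rw [key]
  linarith [h1, h2, h3.le, h4.le, h3.ge]

/-- If `p : ℝ → ℂ` is continuous with `p(t + φ(1)) = c·p(t)` for all `t`, then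
`(p ∘ φ)(t + 2^l) → c·(p ∘ φ)(t)` uniformly on every compact subset of `ℝ`. -/
theorem stmt2 (c : ℂ) (p : ℝ → ℂ) (hp : Continuous p)
    (hper : ∀ t : ℝ, p (t + levitanPhi 1) = c * p t)
    (K : Set ℝ) (hK : IsCompact K) :
    TendstoUniformlyOn (fun (l : ℕ) (t : ℝ) => p (levitanPhi (t + 2 ^ l)))
      (fun t => c * p (levitanPhi t)) atTop K := by
  obtain ⟨R, hR0, hRK⟩ : ∃ R : ℝ, 0 ≤ R ∧ ∀ t ∈ K, |t| ≤ R := by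
    obtain ⟨R, hR⟩ := hK.isBounded.subset_closedBall 0
    refine ⟨max R 0, le_max_right _ _, fun t ht => ?_⟩
    have := hR ht
    rw [Metric.mem_closedBall, Real.dist_eq, sub_zero] at this
    exact this.trans (le_max_left _ _)
  set D : ℝ := (2 + Real.pi * R) * (Real.pi * R) with hD_def
  have hD0 : 0 ≤ D := by positivity
  have hDbound : ∀ t ∈ K, ∀ l : ℕ,
      |levitanPhi (t + 2 ^ l) - (levitanPhi t + levitanPhi 1)| ≤ D / 2 ^ l := by
    intro t ht l
    have h0 : levitanPhi (t + 2 ^ l) - (levitanPhi t + levitanPhi 1)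
        = levitanPhi (t + 2 ^ l) - levitanPhi t - levitanPhi 1 := by ring
    rw [h0]
    refine (levitan_shift t l).trans ?_
    have h1 : |t| ≤ R := hRK t ht
    have h2 : (0:ℝ) < 2 ^ l := by positivity
    have h3 : (2 + Real.pi * |t|) * (Real.pi * |t|) ≤ D := by
      rw [hD_def]
      have ha : (0:ℝ) ≤ Real.pi * |t| := by positivity
      have hb : Real.pi * |t| ≤ Real.pi * R :=
        mul_le_mul_of_nonneg_left h1 Real.pi_pos.le
      nlinarith [ha, hb]
    exact div_le_div_of_nonneg_right h3 h2.le
  set A : ℝ := (Real.pi * R) ^ 2 + Real.pi ^ 2 + D with hA_def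
  have hub : ∀ t ∈ K, levitanPhi t + levitanPhi 1 ≤ (Real.pi * R) ^ 2 + Real.pi ^ 2 := by
    intro t ht
    have h1 := levitan_le_sq t
    have h2 := levitan_le_sq 1
    rw [mul_one] at h2
    have h3 : (Real.pi * t) ^ 2 ≤ (Real.pi * R) ^ 2 := by
      have h4 : |Real.pi * t| ≤ Real.pi * R := by
        rw [abs_mul, abs_of_pos Real.pi_pos]
        exact mul_le_mul_of_nonneg_left (hRK t ht) Real.pi_pos.le
      calc (Real.pi * t) ^ 2 = |Real.pi * t| ^ 2 := (sq_abs _).symm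
      _ ≤ (Real.pi * R) ^ 2 := pow_le_pow_left₀ (abs_nonneg _) h4 2
    linarith
  have hmem1 : ∀ t ∈ K, levitanPhi t + levitanPhi 1 ∈ Set.Icc (0:ℝ) A := by
    intro t ht
    refine ⟨add_nonneg (levitan_nonneg t) (levitan_nonneg 1), ?_⟩
    have := hub t ht
    rw [hA_def]; linarith
  have hmem2 : ∀ t ∈ K, ∀ l : ℕ, levitanPhi (t + 2 ^ l) ∈ Set.Icc (0:ℝ) A := by
    intro t ht l
    refine ⟨levitan_nonneg _, ?_⟩
    have h1 := (abs_le.1 (hDbound t ht l)).2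
    have h2 : (1:ℝ) ≤ 2 ^ l := one_le_pow₀ (by norm_num)
    have h3 : D / 2 ^ l ≤ D := div_le_self hD0 h2
    have h4 := hub t ht
    rw [hA_def]; linarith
  have hUC : UniformContinuousOn p (Set.Icc (0:ℝ) A) :=
    isCompact_Icc.uniformContinuousOn_of_continuous hp.continuousOn
  rw [Metric.tendstoUniformlyOn_iff]
  intro ε hε
  obtain ⟨δ, hδ0, hδ⟩ := Metric.uniformContinuousOn_iff.1 hUC ε hε
  have hlim : Tendsto (fun l : ℕ => D / 2 ^ l) atTop (nhds 0) := by
    have h := tendsto_pow_atTop_nhds_zero_of_lt_one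
      (by norm_num : (0:ℝ) ≤ 1/2) (by norm_num : (1/2:ℝ) < 1)
    have h2 := h.const_mul D
    rw [mul_zero] at h2
    convert h2 using 2 with l
    rw [div_pow, one_pow, div_eq_mul_inv, div_eq_mul_inv, one_mul]
  have hev : ∀ᶠ l : ℕ in atTop, D / 2 ^ l < δ :=
    hlim.eventually (eventually_lt_nhds hδ0)
  filter_upwards [hev] with l hl t ht
  have hdist : dist (levitanPhi t + levitanPhi 1) (levitanPhi (t + 2 ^ l)) < δ := by
    rw [Real.dist_eq, abs_sub_comm]
    exact lt_of_le_of_lt (hDbound t ht l) hl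
  have := hδ _ (hmem1 t ht) _ (hmem2 t ht l) hdist
  rw [hper (levitanPhi t)] at this
  simpa using this
end

section
/- Let f : [0,∞) → c₀ be defined by f(t) := (4n²t²/(t²+n²)²)_{n∈ℕ}, where c₀ is the Banach space of complex (or real) sequences vanishing at infinity with the supremum norm. Then f(0) = 0, and for every real number τ ≥ 1 one has ‖f(τ) − f(0)‖_{c₀} = sup_{n∈ℕ} 4n²τ²/(τ²+n²)² ≥ 4/25. Consequently, there exists no strictly increasing sequence (τ_k) of positive real numbers with τ_k → +∞ such that f(τ_k) → f(0) in c₀; in particular f is not uniformly Poisson stable. -/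
open Filter Topology

/-- The `n`-th component (`n = 1, 2, …`, here indexed by `ℕ` via `n+1`) of the
`c₀`-valued function `f(t) = (4n²t²/(t²+n²)²)ₙ`. -/
noncomputable def cZeroFun (τ : ℝ) (n : ℕ) : ℝ :=
  4 * ((n : ℝ) + 1) ^ 2 * τ ^ 2 / (τ ^ 2 + ((n : ℝ) + 1) ^ 2) ^ 2

lemma cZeroFun_nonneg (τ : ℝ) (n : ℕ) : 0 ≤ cZeroFun τ n := by
  unfold cZeroFun; positivity

lemma cZeroFun_le_one (τ : ℝ) (n : ℕ) : cZeroFun τ n ≤ 1 := by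
  unfold cZeroFun
  rw [div_le_one (by positivity)]
  nlinarith [sq_nonneg (τ ^ 2 - ((n : ℝ) + 1) ^ 2)]

lemma cZeroFun_bdd (τ : ℝ) : BddAbove (Set.range (cZeroFun τ)) :=
  ⟨1, by rintro x ⟨n, rfl⟩; exact cZeroFun_le_one τ n⟩

lemma cZeroFun_zero (n : ℕ) : cZeroFun 0 n = 0 := by
  unfold cZeroFun; simp

lemma ciSup_lower (τ : ℝ) (hτ : 1 ≤ τ) : (4 : ℝ) / 25 ≤ ⨆ n : ℕ, cZeroFun τ n := by
  set n : ℕ := ⌈τ⌉₊ - 1 with hn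
  have hτ0 : (0 : ℝ) ≤ τ := le_trans zero_le_one hτ
  have h1 : 1 ≤ ⌈τ⌉₊ := Nat.one_le_ceil_iff.mpr (lt_of_lt_of_le zero_lt_one hτ)
  have hm : ((n : ℝ) + 1) = (⌈τ⌉₊ : ℝ) := by
    rw [hn, Nat.cast_sub h1]; push_cast; ring
  have hub : (⌈τ⌉₊ : ℝ) < τ + 1 := Nat.ceil_lt_add_one hτ0
  have hlb : τ ≤ (⌈τ⌉₊ : ℝ) := Nat.le_ceil τ
  have key : (4 : ℝ) / 25 ≤ cZeroFun τ n := by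
    unfold cZeroFun
    rw [hm, div_le_div_iff₀ (by norm_num) (by positivity)]
    have hA : τ ^ 2 ≤ (⌈τ⌉₊ : ℝ) ^ 2 := by nlinarith
    have hB : (⌈τ⌉₊ : ℝ) ^ 2 ≤ 4 * τ ^ 2 := by nlinarith
    nlinarith [mul_le_mul_of_nonneg_left hA (sq_nonneg τ),
      mul_le_mul_of_nonneg_right hB (sq_nonneg ((⌈τ⌉₊ : ℝ))),
      mul_le_mul_of_nonneg_right hA (sq_nonneg ((⌈τ⌉₊ : ℝ)))]
  exact le_trans key (le_ciSup (cZeroFun_bdd τ) n)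

/-- `f(0) = 0`; for every `τ ≥ 1` the sup-norm `‖f(τ) − f(0)‖ = sup_n 4n²τ²/(τ²+n²)²`
is at least `4/25`; consequently there is no strictly increasing sequence of positive
reals `τ_k → ∞` with `f(τ_k) → f(0)` in `c₀`, so `f` is not uniformly Poisson stable. -/
theorem stmt3 :
    (∀ n : ℕ, cZeroFun 0 n = 0) ∧
    (∀ τ : ℝ, 1 ≤ τ → (4 : ℝ) / 25 ≤ ⨆ n : ℕ, cZeroFun τ n) ∧
    ¬ ∃ τ : ℕ → ℝ, StrictMono τ ∧ (∀ k, 0 < τ k) ∧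
        Tendsto τ atTop atTop ∧
        Tendsto (fun k => ⨆ n : ℕ, |cZeroFun (τ k) n - cZeroFun 0 n|) atTop (𝓝 0) := by
  refine ⟨cZeroFun_zero, fun τ hτ => ciSup_lower τ hτ, ?_⟩
  rintro ⟨τ, -, -, htop, hlim⟩
  have heq : (fun k => ⨆ n : ℕ, |cZeroFun (τ k) n - cZeroFun 0 n|)
      = fun k => ⨆ n : ℕ, cZeroFun (τ k) n := by
    funext k
    congr 1
    funext n
    rw [cZeroFun_zero, sub_zero, abs_of_nonneg (cZeroFun_nonneg _ _)]
  rw [heq] at hlim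
  have hev : ∀ᶠ k in atTop, (4 : ℝ) / 25 ≤ ⨆ n : ℕ, cZeroFun (τ k) n := by
    filter_upwards [htop.eventually_ge_atTop 1] with k hk
    exact ciSup_lower (τ k) hk
  have := ge_of_tendsto hlim hev
  norm_num at this
end

section
/- Let X be a complex Banach space, let A be a closed linear operator in X (a linear map defined on a subspace D(A) ⊆ X whose graph is closed in X × X), and let R : (0,∞) → L(X) be strongly continuous with ∫₀^∞ ‖R(t)‖ dt < ∞ and such that for every t > 0 and x ∈ D(A): R(t)x ∈ D(A) and A R(t)x = R(t)Ax. Let f : ℝ → X be bounded and continuous with f(s) ∈ D(A) for all s ∈ ℝ and with s ↦ Af(s) bounded. Suppose there exists a sequence (τ_k) of real numbers with |τ_k| → +∞ such that f(·+τ_k) → Af(·) uniformly on compact subsets of ℝ. Then the function F(t) := ∫_{−∞}^t R(t−s) f(s) ds = ∫₀^∞ R(s) f(t−s) ds is well defined, bounded and continuous, F(t) ∈ D(A) with AF(t) = ∫₀^∞ R(s) Af(t−s) ds for all t ∈ ℝ, and F(·+τ_k) → AF(·) uniformly on compact subsets of ℝ. -/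
/-!
Since `‖R‖` is integrable on `(0, ∞)` and `f`, `Af` are bounded, dominated convergence makes
`F` bounded and continuous; measurability of `s ↦ R s (g s)` comes from Banach–Steinhaus, as `R`
is only strongly continuous. A closed operator commuting with every `R s` commutes with the
Bochner integral, which gives `A F(t) = ∫ R s (Af (t - s)) ds`. For the recurrence, split the
integral at a large `T`: the tail is uniformly small by integrability of `‖R‖`, and on `(0, T]`
the arguments `t - s` with `t ∈ K` stay in a compact set on which `f (· + τ k) → Af` uniformly.
-/

open MeasureTheory Filter Topology Set

theorem Submodule.integral_mem_of_ae_mem {α E : Type*} [MeasurableSpace α] {μ : Measure α}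
    [NormedAddCommGroup E] [NormedSpace ℝ E] [CompleteSpace E] (p : Submodule ℝ E)
    (hp : IsClosed (p : Set E)) {φ : α → E} (hφ : ∀ᵐ x ∂μ, φ x ∈ p) :
    ∫ x, φ x ∂μ ∈ p := by
  have : CompleteSpace p := hp.completeSpace_coe
  classical
  let ψ : α → p := fun x => if h : φ x ∈ p then ⟨φ x, h⟩ else 0
  have hψ : (fun x => p.subtypeL (ψ x)) =ᵐ[μ] φ := hφ.mono fun x hx => by simp [ψ, hx]
  rw [← integral_congr_ae hψ, p.subtypeL.integral_comp_comm' p.subtypeₗᵢ.antilipschitz]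
  exact (∫ x, ψ x ∂μ).2

theorem tendsto_setIntegral_Ioi_atTop_zero {G : Type*} [NormedAddCommGroup G] [NormedSpace ℝ G]
    {μ : Measure ℝ} {f : ℝ → G} {a : ℝ} (hf : IntegrableOn f (Ioi a) μ) :
    Tendsto (fun T => ∫ x in Ioi T, f x ∂μ) atTop (𝓝 0) := by
  have hempty : ⋂ T : ℝ, Ioi T = ∅ :=
    eq_empty_of_forall_notMem fun x hx => lt_irrefl x (mem_iInter.mp hx x)
  simpa [hempty] using tendsto_setIntegral_of_antitone (fun _ => measurableSet_Ioi)
    (fun _ _ h => Ioi_subset_Ioi h) ⟨a, hf⟩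

section StronglyContinuous

variable {α 𝕜 E F : Type*} [TopologicalSpace α] [NontriviallyNormedField 𝕜]
  [NormedAddCommGroup E] [NormedSpace 𝕜 E] [CompleteSpace E]
  [NormedAddCommGroup F] [NormedSpace 𝕜 F] {R : α → E →L[𝕜] F}

theorem IsCompact.exists_bound_opNorm_of_continuousOn_apply {K : Set α} (hK : IsCompact K)
    (hR : ∀ x, ContinuousOn (fun a => R a x) K) : ∃ M, ∀ a ∈ K, ‖R a‖ ≤ M := by
  obtain ⟨M, hM⟩ := banach_steinhaus (g := fun a : K => R a) fun x =>
    (hK.exists_bound_of_continuousOn (hR x)).imp fun _ hC a => hC a a.2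
  exact ⟨M, fun a ha => hM ⟨a, ha⟩⟩

theorem IsOpen.continuousOn_clm_apply_of_continuousOn_apply [LocallyCompactSpace α]
    {U : Set α} (hU : IsOpen U) (hR : ∀ x, ContinuousOn (fun a => R a x) U) {g : α → E}
    (hg : ContinuousOn g U) : ContinuousOn (fun a => R a (g a)) U := by
  rw [hU.continuousOn_iff] at hg ⊢
  intro a ha
  obtain ⟨K, hK, haK, hKU⟩ := exists_compact_subset hU ha
  obtain ⟨M, hM⟩ := hK.exists_bound_opNorm_of_continuousOn_apply fun x => (hR x).mono hKU
  -- `R b (g b) = R b (g b - g a) + R b (g a)`, and `‖R b‖ ≤ M` near `a` kills the first term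
  have hsmall : Tendsto (fun b => R b (g b - g a)) (𝓝 a) (𝓝 0) := by
    refine squeeze_zero_norm' ?_ (by simpa using ((hg ha).sub_const (g a)).norm.const_mul M)
    filter_upwards [mem_interior_iff_mem_nhds.mp haK] with b hb
    exact (R b).le_of_opNorm_le (hM b hb) _
  simpa [ContinuousAt] using hsmall.add ((hR (g a)).continuousAt (hU.mem_nhds ha))

theorem IsOpen.integrableOn_clm_apply [MeasurableSpace α] [OpensMeasurableSpace α]
    [SecondCountableTopology α] [LocallyCompactSpace α] {μ : Measure α} {U : Set α}
    (hU : IsOpen U) (hR : ∀ x, ContinuousOn (fun a => R a x) U)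
    (hRint : IntegrableOn (fun a => ‖R a‖) U μ) {g : α → E} (hg : ContinuousOn g U) {C : ℝ}
    (hgC : ∀ a ∈ U, ‖g a‖ ≤ C) : IntegrableOn (fun a => R a (g a)) U μ := by
  have hcont := hU.continuousOn_clm_apply_of_continuousOn_apply hR hg
  refine (hRint.mul_const C).mono' (hcont.aestronglyMeasurable hU.measurableSet) ?_
  filter_upwards [ae_restrict_mem hU.measurableSet] with a ha
  exact (R a).le_opNorm_of_le (hgC a ha)

end StronglyContinuous

section CausalConvolution

variable {𝕜 E F : Type*} [NontriviallyNormedField 𝕜]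
  [NormedAddCommGroup E] [NormedSpace 𝕜 E]
  [NormedAddCommGroup F] [NormedSpace 𝕜 F] [NormedSpace ℝ F] {R : ℝ → E →L[𝕜] F}

/-- `causalConv R g t = ∫_{-∞}^t R(t - s) g(s) ds`, written over the half-line `s > 0`. -/
noncomputable def causalConv (R : ℝ → E →L[𝕜] F) (g : ℝ → E) (t : ℝ) : F :=
  ∫ s in Ioi 0, R s (g (t - s))

theorem causalConv_comp_add_right (g : ℝ → E) (a : ℝ) :
    causalConv R (fun t => g (t + a)) = fun t => causalConv R g (t + a) := by
  ext t
  simp only [causalConv, sub_add_eq_add_sub]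

theorem norm_causalConv_le (hRint : IntegrableOn (fun s => ‖R s‖) (Ioi 0)) {g : ℝ → E} {C : ℝ}
    (hgC : ∀ s, ‖g s‖ ≤ C) (t : ℝ) : ‖causalConv R g t‖ ≤ (∫ s in Ioi 0, ‖R s‖) * C := by
  rw [← integral_mul_const]
  exact norm_integral_le_of_norm_le (hRint.mul_const C)
    (Eventually.of_forall fun s => (R s).le_opNorm_of_le (hgC _))

theorem norm_setIntegral_Ioi_clm_apply_le (hRint : IntegrableOn (fun s => ‖R s‖) (Ioi 0))
    {u : ℝ → E} {η D T : ℝ} (hη : 0 ≤ η) (hT : 0 ≤ T) (hnear : ∀ s ∈ Ioc 0 T, ‖u s‖ ≤ η)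
    (hfar : ∀ s, ‖u s‖ ≤ D) :
    ‖∫ s in Ioi 0, R s (u s)‖ ≤ η * (∫ s in Ioi 0, ‖R s‖) + D * ∫ s in Ioi T, ‖R s‖ := by
  have htail : Integrable ((Ioi T).indicator fun s => ‖R s‖) (volume.restrict (Ioi 0)) :=
    hRint.integrableOn.integrable_indicator measurableSet_Ioi
  calc ‖∫ s in Ioi 0, R s (u s)‖
      ≤ ∫ s in Ioi 0, (η * ‖R s‖ + D * (Ioi T).indicator (fun s => ‖R s‖) s) := by
        refine norm_integral_le_of_norm_le ((hRint.const_mul η).add (htail.const_mul D)) ?_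
        filter_upwards [ae_restrict_mem measurableSet_Ioi] with s hs
        by_cases hsT : s ≤ T
        · rw [indicator_of_notMem (show s ∉ Ioi T from not_lt.mpr hsT), mul_zero, add_zero,
            mul_comm]
          exact (R s).le_opNorm_of_le (hnear s ⟨hs, hsT⟩)
        · rw [indicator_of_mem (show s ∈ Ioi T from not_le.mp hsT), mul_comm D]
          exact ((R s).le_opNorm_of_le (hfar s)).trans
            (le_add_of_nonneg_left (mul_nonneg hη (norm_nonneg _)))
    _ = η * (∫ s in Ioi 0, ‖R s‖) + D * ∫ s in Ioi T, ‖R s‖ := by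
        rw [integral_add (hRint.const_mul η) (htail.const_mul D), integral_const_mul,
          integral_const_mul, integral_indicator measurableSet_Ioi,
          Measure.restrict_restrict measurableSet_Ioi, Ioi_inter_Ioi, sup_eq_left.mpr hT]

variable [CompleteSpace E]

omit [NormedSpace ℝ F] in
theorem integrableOn_causalConv_integrand (hRsc : ∀ x, ContinuousOn (fun s => R s x) (Ioi 0))
    (hRint : IntegrableOn (fun s => ‖R s‖) (Ioi 0)) {g : ℝ → E} (hg : Continuous g) {C : ℝ}
    (hgC : ∀ s, ‖g s‖ ≤ C) (t : ℝ) : IntegrableOn (fun s => R s (g (t - s))) (Ioi 0) :=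
  isOpen_Ioi.integrableOn_clm_apply hRsc hRint (by fun_prop) fun s _ => hgC _

theorem continuous_causalConv (hRsc : ∀ x, ContinuousOn (fun s => R s x) (Ioi 0))
    (hRint : IntegrableOn (fun s => ‖R s‖) (Ioi 0)) {g : ℝ → E} (hg : Continuous g) {C : ℝ}
    (hgC : ∀ s, ‖g s‖ ≤ C) : Continuous (causalConv R g) :=
  continuous_of_dominated
    (fun t => (integrableOn_causalConv_integrand hRsc hRint hg hgC t).aestronglyMeasurable)
    (fun t => Eventually.of_forall fun s => (R s).le_opNorm_of_le (hgC _))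
    (hRint.mul_const C) (Eventually.of_forall fun s => by fun_prop)

theorem TendstoLocallyUniformly.causalConv {ι : Type*} {l : Filter ι}
    (hRsc : ∀ x, ContinuousOn (fun s => R s x) (Ioi 0))
    (hRint : IntegrableOn (fun s => ‖R s‖) (Ioi 0)) {g : ι → ℝ → E} {h : ℝ → E}
    (hgc : ∀ k, Continuous (g k)) (hhc : Continuous h) {C C' : ℝ} (hgC : ∀ k s, ‖g k s‖ ≤ C)
    (hhC : ∀ s, ‖h s‖ ≤ C') (hgh : TendstoLocallyUniformly g h l) :
    TendstoLocallyUniformly (fun k => causalConv R (g k)) (causalConv R h) l := by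
  rw [tendstoLocallyUniformly_iff_forall_isCompact] at hgh ⊢
  intro K hK
  rw [Metric.tendstoUniformlyOn_iff]
  intro ε hε
  obtain ⟨T, hT, hT0⟩ : ∃ T, (C' + C) * (∫ s in Ioi T, ‖R s‖) < ε / 2 ∧ 0 ≤ T :=
    (((tendsto_setIntegral_Ioi_atTop_zero hRint).const_mul (C' + C)).eventually
      (gt_mem_nhds (by simpa using half_pos hε))).and (eventually_ge_atTop 0) |>.exists
  obtain ⟨η, hη, hηI⟩ := exists_pos_mul_lt (half_pos hε) (∫ s in Ioi 0, ‖R s‖)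
  have hK' : IsCompact ((fun p : ℝ × ℝ => p.1 - p.2) '' K ×ˢ Icc 0 T) :=
    (hK.prod isCompact_Icc).image (by fun_prop)
  filter_upwards [Metric.tendstoUniformlyOn_iff.mp (hgh _ hK') η hη] with k hk t ht
  rw [dist_eq_norm, _root_.causalConv, _root_.causalConv,
    ← integral_sub (integrableOn_causalConv_integrand hRsc hRint hhc hhC t)
      (integrableOn_causalConv_integrand hRsc hRint (hgc k) (hgC k) t)]
  simp_rw [← map_sub]
  have hnear : ∀ s ∈ Ioc 0 T, ‖h (t - s) - g k (t - s)‖ ≤ η := fun s hs => by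
    rw [← dist_eq_norm]
    exact (hk _ ⟨(t, s), ⟨ht, Ioc_subset_Icc_self hs⟩, rfl⟩).le
  have := norm_setIntegral_Ioi_clm_apply_le hRint hη.le hT0 hnear
    fun s => norm_sub_le_of_le (hhC _) (hgC k _)
  linarith

end CausalConvolution

theorem stmt4_general {X : Type*} [NormedAddCommGroup X] [NormedSpace ℂ X] [CompleteSpace X]
    (A : X →ₗ.[ℂ] X) (hA : IsClosed (A.graph : Set (X × X)))
    (R : ℝ → X →L[ℂ] X)
    (hRsc : ∀ x : X, ContinuousOn (fun t => R t x) (Set.Ioi 0))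
    (hRint : IntegrableOn (fun t => ‖R t‖) (Set.Ioi 0))
    (hRA : ∀ t ∈ Set.Ioi (0 : ℝ), ∀ x y : X, (x, y) ∈ A.graph → (R t x, R t y) ∈ A.graph)
    (f Af : ℝ → X) (hfc : Continuous f) (hfb : ∃ C, ∀ s, ‖f s‖ ≤ C)
    (hgraph : ∀ s, (f s, Af s) ∈ A.graph) (hAfb : ∃ C, ∀ s, ‖Af s‖ ≤ C)
    (τ : ℕ → ℝ)
    (hrec : ∀ K : Set ℝ, IsCompact K →
      TendstoUniformlyOn (fun k t => f (t + τ k)) Af atTop K) :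
    (∀ t : ℝ, IntegrableOn (fun s => R s (f (t - s))) (Set.Ioi 0)) ∧
    Continuous (fun t => ∫ s in Set.Ioi (0 : ℝ), R s (f (t - s))) ∧
    (∃ C, ∀ t, ‖∫ s in Set.Ioi (0 : ℝ), R s (f (t - s))‖ ≤ C) ∧
    (∀ t : ℝ, ((∫ s in Set.Ioi (0 : ℝ), R s (f (t - s))),
        ∫ s in Set.Ioi (0 : ℝ), R s (Af (t - s))) ∈ A.graph) ∧
    (∀ K : Set ℝ, IsCompact K →
      TendstoUniformlyOn (fun k t => ∫ s in Set.Ioi (0 : ℝ), R s (f (t + τ k - s)))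
        (fun t => ∫ s in Set.Ioi (0 : ℝ), R s (Af (t - s))) atTop K) := by
  obtain ⟨C, hC⟩ := hfb
  obtain ⟨C', hC'⟩ := hAfb
  have hshift : ∀ k, Continuous fun t => f (t + τ k) := fun k => by fun_prop
  have hlim : TendstoLocallyUniformly (fun k t => f (t + τ k)) Af atTop :=
    tendstoLocallyUniformly_iff_forall_isCompact.mpr hrec
  have hAfc : Continuous Af := hlim.continuous (Frequently.of_forall hshift)
  have hint := integrableOn_causalConv_integrand hRsc hRint hfc hC
  refine ⟨hint, continuous_causalConv hRsc hRint hfc hC,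
    ⟨_, norm_causalConv_le hRint hC⟩, fun t => ?_, ?_⟩
  · rw [← integral_pair (hint t) (integrableOn_causalConv_integrand hRsc hRint hAfc hC' t)]
    exact (A.graph.restrictScalars ℝ).integral_mem_of_ae_mem hA
      (ae_restrict_of_forall_mem measurableSet_Ioi fun s hs => hRA s hs _ _ (hgraph _))
  · have hconv := hlim.causalConv hRsc hRint hshift hAfc (fun _ _ => hC _) hC'
    simp_rw [causalConv_comp_add_right] at hconv
    exact tendstoLocallyUniformly_iff_forall_isCompact.mp hconv

/-- Invariance of the Bebutov-type uniform recurrence (with respect to the binary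
relation given by a closed linear operator `A`) under the infinite convolution product
`F(t) = ∫_{-∞}^t R(t−s) f(s) ds = ∫_0^∞ R(s) f(t−s) ds`. -/
theorem stmt4 {X : Type*} [NormedAddCommGroup X] [NormedSpace ℂ X] [CompleteSpace X]
    (A : X →ₗ.[ℂ] X) (hA : IsClosed (A.graph : Set (X × X)))
    (R : ℝ → X →L[ℂ] X)
    (hRsc : ∀ x : X, ContinuousOn (fun t => R t x) (Set.Ioi 0))
    (hRint : IntegrableOn (fun t => ‖R t‖) (Set.Ioi 0))
    (hRA : ∀ t ∈ Set.Ioi (0 : ℝ), ∀ x y : X, (x, y) ∈ A.graph → (R t x, R t y) ∈ A.graph)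
    (f Af : ℝ → X) (hfc : Continuous f) (hfb : ∃ C, ∀ s, ‖f s‖ ≤ C)
    (hgraph : ∀ s, (f s, Af s) ∈ A.graph) (hAfb : ∃ C, ∀ s, ‖Af s‖ ≤ C)
    (τ : ℕ → ℝ) (hτ : Tendsto (fun k => |τ k|) atTop atTop)
    (hrec : ∀ K : Set ℝ, IsCompact K →
      TendstoUniformlyOn (fun k t => f (t + τ k)) Af atTop K) :
    (∀ t : ℝ, IntegrableOn (fun s => R s (f (t - s))) (Set.Ioi 0)) ∧
    Continuous (fun t => ∫ s in Set.Ioi (0 : ℝ), R s (f (t - s))) ∧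
    (∃ C, ∀ t, ‖∫ s in Set.Ioi (0 : ℝ), R s (f (t - s))‖ ≤ C) ∧
    (∀ t : ℝ, ((∫ s in Set.Ioi (0 : ℝ), R s (f (t - s))),
        ∫ s in Set.Ioi (0 : ℝ), R s (Af (t - s))) ∈ A.graph) ∧
    (∀ K : Set ℝ, IsCompact K →
      TendstoUniformlyOn (fun k t => ∫ s in Set.Ioi (0 : ℝ), R s (f (t + τ k - s)))
        (fun t => ∫ s in Set.Ioi (0 : ℝ), R s (Af (t - s))) atTop K) :=
  stmt4_general A hA R hRsc hRint hRA f Af hfc hfb hgraph hAfb τ hrec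
end

section
/- Let X be a complex Banach space, let A be a closed linear operator in X, let h ∈ L¹(ℝⁿ), and let f : ℝⁿ → X be bounded and continuous with f(s) ∈ D(A) for all s ∈ ℝⁿ and with s ↦ Af(s) bounded. Suppose there exists a sequence (τ_k) in ℝⁿ with |τ_k| → +∞ such that f(·+τ_k) → Af(·) uniformly on compact subsets of ℝⁿ. Then the convolution H(t) := ∫_{ℝⁿ} h(t−s) f(s) ds is well defined, bounded and continuous, H(t) ∈ D(A) with AH(t) = ∫_{ℝⁿ} h(t−s) Af(s) ds for all t ∈ ℝⁿ, and H(·+τ_k) → AH(·) uniformly on compact subsets of ℝⁿ. -/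
/-!
Since `A` is closed, its graph is a closed subspace of `X × X`, and a Bochner integral of a
function with values in a closed subspace stays in it; this gives
`(H t, ∫ h (t - s) • Af s) ∈ graph A`.
After the substitution `s ↦ s + τ k`, `H (t + τ k) - A H t = ∫ h (t - s) • (f (s + τ k) - Af s) ds`.
Split the kernel at a large radius `R`: on the ball, `f (· + τ k) - Af` is uniformly small for
large `k` (the translates converge uniformly on compacts), and off it the integrand is bounded
by `(sup ‖f‖ + sup ‖Af‖) ‖h‖`, whose integral over the tail is small.
-/

open MeasureTheory Filter Topology Metric Set

lemma integral_mem_of_isClosed {α E : Type*} [MeasurableSpace α] {μ : Measure α}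
    [NormedAddCommGroup E] [NormedSpace ℝ E] [CompleteSpace E]
    (Y : Submodule ℝ E) (hY : IsClosed (Y : Set E)) {F : α → E} (hF : ∀ a, F a ∈ Y) :
    ∫ a, F a ∂μ ∈ Y := by
  by_cases hFi : Integrable F μ
  · have : CompleteSpace Y := hY.completeSpace_coe
    let q : α → Y := fun a => ⟨F a, hF a⟩
    have hq : Integrable q μ :=
      ⟨IsEmbedding.subtypeVal.aestronglyMeasurable_comp_iff.1 hFi.aestronglyMeasurable,
        hFi.hasFiniteIntegral⟩
    rw [show ∫ a, F a ∂μ = Y.subtypeL (∫ a, q a ∂μ) from Y.subtypeL.integral_comp_comm hq]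
    exact (∫ a, q a ∂μ).2
  · simp [integral_undef hFi]

lemma tendsto_integral_compl_closedBall {α E : Type*} [PseudoMetricSpace α] [MeasurableSpace α]
    [OpensMeasurableSpace α] {μ : Measure α} [NormedAddCommGroup E] [NormedSpace ℝ E]
    {f : α → E} (hf : Integrable f μ) (x : α) :
    Tendsto (fun R : ℝ => ∫ y in (closedBall x R)ᶜ, f y ∂μ) atTop (𝓝 0) := by
  have hlim := tendsto_setIntegral_of_antitone (μ := μ) (f := f)
    (s := fun R : ℝ => (closedBall x R)ᶜ) (fun R => measurableSet_closedBall.compl)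
    (fun a b hab => compl_subset_compl.2 (closedBall_subset_closedBall hab)) ⟨0, hf.integrableOn⟩
  have hempty : (⋂ R : ℝ, (closedBall x R)ᶜ) = ∅ :=
    iInter_eq_empty_iff.2 fun y => ⟨dist y x, not_not.2 (mem_closedBall.2 le_rfl)⟩
  rwa [hempty, Measure.restrict_empty, integral_zero_measure] at hlim

lemma integral_smul_add_right {G X : Type*} [AddCommGroup G] [MeasurableSpace G] [MeasurableAdd G]
    {μ : Measure G} [μ.IsAddRightInvariant] [NormedAddCommGroup X] [NormedSpace ℂ X]
    (h : G → ℂ) (g : G → X) (t a : G) :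
    ∫ s, h (t + a - s) • g s ∂μ = ∫ s, h (t - s) • g (s + a) ∂μ := by
  rw [← integral_add_right_eq_self (fun s => h (t + a - s) • g s) a]
  simp_rw [add_sub_add_right_eq_sub]

section Convolution

variable {G X : Type*} [NormedAddCommGroup G] [MeasurableSpace G] [BorelSpace G]
  {μ : Measure G} [μ.IsAddLeftInvariant] [μ.IsNegInvariant]
  [NormedAddCommGroup X] [NormedSpace ℂ X] {h : G → ℂ}

lemma integrable_smul_of_norm_le (hh : Integrable h μ) {g : G → X}
    (hg : AEStronglyMeasurable g μ) {C : ℝ} (hC : ∀ s, ‖g s‖ ≤ C) (t : G) :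
    Integrable (fun s => h (t - s) • g s) μ :=
  (hh.comp_sub_left t).smul_of_top_left (memLp_top_of_bound hg C (.of_forall hC))

lemma norm_integral_smul_le (hh : Integrable h μ) {g : G → X} {C : ℝ}
    (hC : ∀ s, ‖g s‖ ≤ C) (t : G) :
    ‖∫ s, h (t - s) • g s ∂μ‖ ≤ C * ∫ x, ‖h x‖ ∂μ := by
  calc ‖∫ s, h (t - s) • g s ∂μ‖ ≤ ∫ s, C * ‖h (t - s)‖ ∂μ :=
        norm_integral_le_of_norm_le ((hh.comp_sub_left t).norm.const_mul C)
          (.of_forall fun s => by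
            rw [norm_smul, mul_comm]; exact mul_le_mul_of_nonneg_right (hC s) (norm_nonneg _))
    _ = C * ∫ x, ‖h x‖ ∂μ := by
        rw [integral_const_mul, integral_sub_left_eq_self (fun x => ‖h x‖) μ t]

lemma norm_integral_smul_le_of_norm_le_on_closedBall (hh : Integrable h μ) {g : G → X}
    {M R δ C : ℝ} (hδ : 0 ≤ δ) (hgδ : ∀ s ∈ closedBall (0 : G) (M + R), ‖g s‖ ≤ δ)
    (hgC : ∀ s, ‖g s‖ ≤ C) {t : G} (ht : ‖t‖ ≤ M) :
    ‖∫ s, h (t - s) • g s ∂μ‖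
      ≤ δ * ∫ x, ‖h x‖ ∂μ + C * ∫ x in (closedBall (0 : G) R)ᶜ, ‖h x‖ ∂μ := by
  have hshift : ∫ s, h (t - s) • g s ∂μ = ∫ u, h u • g (t - u) ∂μ := by
    simpa only [sub_sub_cancel] using integral_sub_left_eq_self (fun u => h u • g (t - u)) μ t
  have hpoint : ∀ u, ‖h u • g (t - u)‖
      ≤ δ * ‖h u‖ + C * (closedBall (0 : G) R)ᶜ.indicator (fun x => ‖h x‖) u := by
    intro u
    rw [norm_smul]
    by_cases hu : u ∈ closedBall (0 : G) R
    · have htu : t - u ∈ closedBall (0 : G) (M + R) := by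
        rw [mem_closedBall_zero_iff] at hu ⊢
        exact (norm_sub_le t u).trans (add_le_add ht hu)
      rw [indicator_of_notMem (not_not.2 hu), mul_zero, add_zero, mul_comm δ]
      exact mul_le_mul_of_nonneg_left (hgδ _ htu) (norm_nonneg (h u))
    · rw [indicator_of_mem hu, mul_comm C]
      nlinarith [hgC (t - u), norm_nonneg (h u)]
  rw [hshift]
  calc ‖∫ u, h u • g (t - u) ∂μ‖
      ≤ ∫ u, (δ * ‖h u‖ + C * (closedBall (0 : G) R)ᶜ.indicator (fun x => ‖h x‖) u) ∂μ :=
        norm_integral_le_of_norm_le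
          ((hh.norm.const_mul δ).add
            ((hh.norm.indicator measurableSet_closedBall.compl).const_mul C))
          (.of_forall hpoint)
    _ = _ := by
        rw [integral_add (hh.norm.const_mul δ)
            ((hh.norm.indicator measurableSet_closedBall.compl).const_mul C),
          integral_const_mul, integral_const_mul, integral_indicator measurableSet_closedBall.compl]

theorem TendstoLocallyUniformly.integral_smul [ProperSpace G] {ι : Type*} {l : Filter ι}
    (hh : Integrable h μ) {F : ι → G → X} {g : G → X} {C₁ C₂ : ℝ}
    (hFm : ∀ i, AEStronglyMeasurable (F i) μ) (hgm : AEStronglyMeasurable g μ)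
    (hF : ∀ i s, ‖F i s‖ ≤ C₁) (hg : ∀ s, ‖g s‖ ≤ C₂) (hlim : TendstoLocallyUniformly F g l) :
    TendstoLocallyUniformly (fun i t => ∫ s, h (t - s) • F i s ∂μ)
      (fun t => ∫ s, h (t - s) • g s ∂μ) l := by
  rw [tendstoLocallyUniformly_iff_forall_isCompact] at hlim ⊢
  intro K hK
  rw [Metric.tendstoUniformlyOn_iff]
  intro ε hε
  obtain ⟨M, hKM⟩ := hK.isBounded.subset_closedBall 0
  obtain ⟨R, hR⟩ : ∃ R, (C₂ + C₁) * ∫ x in (closedBall (0 : G) R)ᶜ, ‖h x‖ ∂μ < ε / 2 :=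
    (((tendsto_integral_compl_closedBall hh.norm 0).const_mul (C₂ + C₁)).eventually
      (gt_mem_nhds (by simpa using half_pos hε))).exists
  obtain ⟨δ, hδ, hδε⟩ := exists_pos_mul_lt (half_pos hε) (∫ x, ‖h x‖ ∂μ)
  filter_upwards [Metric.tendstoUniformlyOn_iff.1
    (hlim _ (isCompact_closedBall (0 : G) (M + R))) δ hδ] with i hi t ht
  have hdiff : ∫ s, h (t - s) • g s ∂μ - ∫ s, h (t - s) • F i s ∂μ
      = ∫ s, h (t - s) • (g s - F i s) ∂μ := by
    rw [← integral_sub (integrable_smul_of_norm_le hh hgm hg t)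
      (integrable_smul_of_norm_le hh (hFm i) (hF i) t)]
    simp_rw [smul_sub]
  rw [dist_eq_norm, hdiff]
  have hest := norm_integral_smul_le_of_norm_le_on_closedBall (μ := μ) hh hδ.le
    (fun s hs => by simpa [dist_eq_norm] using (hi s hs).le)
    (fun s => norm_sub_le_of_le (hg s) (hF i s)) (t := t) (by simpa using hKM ht)
  linarith

end Convolution

theorem stmt6_general {X : Type*} [NormedAddCommGroup X] [NormedSpace ℂ X] [CompleteSpace X]
    (n : ℕ) (A : X →ₗ.[ℂ] X) (hA : IsClosed (A.graph : Set (X × X)))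
    (h : EuclideanSpace ℝ (Fin n) → ℂ) (hh : Integrable h)
    (f Af : EuclideanSpace ℝ (Fin n) → X) (hfc : Continuous f)
    (hfb : ∃ C, ∀ s, ‖f s‖ ≤ C)
    (hgraph : ∀ s, (f s, Af s) ∈ A.graph) (hAfb : ∃ C, ∀ s, ‖Af s‖ ≤ C)
    (τ : ℕ → EuclideanSpace ℝ (Fin n))
    (hrec : ∀ K : Set (EuclideanSpace ℝ (Fin n)), IsCompact K →
      TendstoUniformlyOn (fun k t => f (t + τ k)) Af atTop K) :
    (∀ t, Integrable (fun s => h (t - s) • f s)) ∧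
    Continuous (fun t => ∫ s, h (t - s) • f s) ∧
    (∃ C, ∀ t, ‖∫ s, h (t - s) • f s‖ ≤ C) ∧
    (∀ t, ((∫ s, h (t - s) • f s), ∫ s, h (t - s) • Af s) ∈ A.graph) ∧
    (∀ K : Set (EuclideanSpace ℝ (Fin n)), IsCompact K →
      TendstoUniformlyOn (fun k t => ∫ s, h (t + τ k - s) • f s)
        (fun t => ∫ s, h (t - s) • Af s) atTop K) := by
  obtain ⟨Cf, hCf⟩ := hfb
  obtain ⟨CA, hCA⟩ := hAfb
  have hrec' : TendstoLocallyUniformly (fun k t => f (t + τ k)) Af atTop :=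
    tendstoLocallyUniformly_iff_forall_isCompact.2 hrec
  have hAfc : Continuous Af := hrec'.continuous (.of_forall fun k => by fun_prop)
  have hfi := integrable_smul_of_norm_le hh hfc.aestronglyMeasurable hCf
  refine ⟨hfi, ?_, ⟨Cf * ∫ x, ‖h x‖, norm_integral_smul_le hh hCf⟩, fun t => ?_, ?_⟩
  · have hconv : (fun t => ∫ s, h (t - s) • f s) =
        convolution h f (ContinuousLinearMap.lsmul ℂ ℂ) volume :=
      funext fun t => convolution_lsmul_swap.symm
    rw [hconv]
    exact BddAbove.continuous_convolution_right_of_integrable _ ⟨Cf, forall_mem_range.2 hCf⟩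
      hh hfc
  · rw [← integral_pair (hfi t) (integrable_smul_of_norm_le hh hAfc.aestronglyMeasurable hCA t)]
    exact integral_mem_of_isClosed (A.graph.restrictScalars ℝ) hA
      fun s => A.graph.smul_mem (h (t - s)) (hgraph s)
  · simp_rw [integral_smul_add_right]
    exact tendstoLocallyUniformly_iff_forall_isCompact.1 <|
      hrec'.integral_smul hh (fun k => (hfc.comp (continuous_add_const _)).aestronglyMeasurable)
        hAfc.aestronglyMeasurable (fun k s => hCf _) hCA

/-- Invariance of Bebutov-type uniform recurrence (with respect to the binary relation
given by a closed linear operator `A`) under convolution with an `L¹(ℝⁿ)` kernel: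
`H(t) = ∫_{ℝⁿ} h(t−s) f(s) ds`. -/
theorem stmt6 {X : Type*} [NormedAddCommGroup X] [NormedSpace ℂ X] [CompleteSpace X]
    (n : ℕ) (A : X →ₗ.[ℂ] X) (hA : IsClosed (A.graph : Set (X × X)))
    (h : EuclideanSpace ℝ (Fin n) → ℂ) (hh : Integrable h)
    (f Af : EuclideanSpace ℝ (Fin n) → X) (hfc : Continuous f)
    (hfb : ∃ C, ∀ s, ‖f s‖ ≤ C)
    (hgraph : ∀ s, (f s, Af s) ∈ A.graph) (hAfb : ∃ C, ∀ s, ‖Af s‖ ≤ C)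
    (τ : ℕ → EuclideanSpace ℝ (Fin n)) (hτ : Tendsto (fun k => ‖τ k‖) atTop atTop)
    (hrec : ∀ K : Set (EuclideanSpace ℝ (Fin n)), IsCompact K →
      TendstoUniformlyOn (fun k t => f (t + τ k)) Af atTop K) :
    (∀ t, Integrable (fun s => h (t - s) • f s)) ∧
    Continuous (fun t => ∫ s, h (t - s) • f s) ∧
    (∃ C, ∀ t, ‖∫ s, h (t - s) • f s‖ ≤ C) ∧
    (∀ t, ((∫ s, h (t - s) • f s), ∫ s, h (t - s) • Af s) ∈ A.graph) ∧
    (∀ K : Set (EuclideanSpace ℝ (Fin n)), IsCompact K →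
      TendstoUniformlyOn (fun k t => ∫ s, h (t + τ k - s) • f s)
        (fun t => ∫ s, h (t - s) • Af s) atTop K) :=
  stmt6_general n A hA h hh f Af hfc hfb hgraph hAfb τ hrec
end

section
/- Let X be a complex Banach space, let f : ℝⁿ → X be bounded, continuous and Levitan N-almost periodic, and let h ∈ L¹(ℝⁿ). Then the convolution H(t) := ∫_{ℝⁿ} h(t−s) f(s) ds is bounded, continuous and Levitan N-almost periodic. -/
/-! If `τ` is an `(η, N + R)`-almost period of `f`, then for `‖t‖ ≤ N` the integral
`(h ⋆ f) (t + τ) - (h ⋆ f) t = ∫ h u • (f (t - u + τ) - f (t - u)) du` is at most `η ‖h‖₁` over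
the ball `‖u‖ ≤ R` and at most `2 ‖f‖∞ ∫_{‖u‖ > R} |h|` outside it. Taking `R` large and then `η`
small, the `(η, N + R)`-almost periods of `f` are `(ε, N)`-almost periods of `h ⋆ f`, so the
relatively dense sets witnessing the Levitan property of `f` also witness it for `h ⋆ f`. -/

open MeasureTheory Filter Topology

/-- A set `E ⊆ ℝⁿ` is relatively dense if there is `l > 0` such that every closed
ball of radius `l` meets `E`. -/
def RelativelyDense {n : ℕ} (E : Set (EuclideanSpace ℝ (Fin n))) : Prop :=
  ∃ l > (0 : ℝ), ∀ x : EuclideanSpace ℝ (Fin n), ∃ τ ∈ E, ‖τ - x‖ ≤ l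

/-- The set `E(ε, N)` of all `(ε, N)`-almost periods of `F`. -/
def AlmostPeriodSet {n : ℕ} {X : Type*} [NormedAddCommGroup X]
    (F : EuclideanSpace ℝ (Fin n) → X) (ε N : ℝ) : Set (EuclideanSpace ℝ (Fin n)) :=
  {τ | ∀ t, ‖t‖ ≤ N → ‖F (t + τ) - F t‖ ≤ ε}

/-- `F` is Levitan pre-almost periodic: `E(ε, N)` is relatively dense for all `ε, N > 0`. -/
def LevitanPreAP {n : ℕ} {X : Type*} [NormedAddCommGroup X]
    (F : EuclideanSpace ℝ (Fin n) → X) : Prop :=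
  ∀ ε > (0 : ℝ), ∀ N > (0 : ℝ), RelativelyDense (AlmostPeriodSet F ε N)

/-- `F` is Levitan `N`-almost periodic. -/
def LevitanNAP {n : ℕ} {X : Type*} [NormedAddCommGroup X]
    (F : EuclideanSpace ℝ (Fin n) → X) : Prop :=
  LevitanPreAP F ∧
    ∀ N > (0 : ℝ), ∀ ε > (0 : ℝ), ∃ η > (0 : ℝ),
      ∃ E : Set (EuclideanSpace ℝ (Fin n)), RelativelyDense E ∧
        E ⊆ AlmostPeriodSet F η N ∧
        ∀ a ∈ E, ∀ b ∈ E, a + b ∈ AlmostPeriodSet F ε N ∧ a - b ∈ AlmostPeriodSet F ε N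

open scoped Convolution
open ContinuousLinearMap Metric

theorem AlmostPeriodSet.mono {n : ℕ} {X : Type*} [NormedAddCommGroup X]
    {F : EuclideanSpace ℝ (Fin n) → X} {ε₁ ε₂ N : ℝ} (hε : ε₁ ≤ ε₂) :
    AlmostPeriodSet F ε₁ N ⊆ AlmostPeriodSet F ε₂ N :=
  fun _ hτ t ht => (hτ t ht).trans hε

theorem mem_almostPeriodSet_of_norm_le {n : ℕ} {X : Type*} [NormedAddCommGroup X]
    {F : EuclideanSpace ℝ (Fin n) → X} {C : ℝ} (hF : ∀ t, ‖F t‖ ≤ C) (N : ℝ)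
    (τ : EuclideanSpace ℝ (Fin n)) : τ ∈ AlmostPeriodSet F (2 * C) N :=
  fun t _ => (norm_sub_le _ _).trans (by linarith [hF (t + τ), hF t])

theorem RelativelyDense.mono {n : ℕ} {E E' : Set (EuclideanSpace ℝ (Fin n))}
    (hE : RelativelyDense E) (hEE' : E ⊆ E') : RelativelyDense E' := by
  obtain ⟨l, hl, hdense⟩ := hE
  refine ⟨l, hl, fun x => ?_⟩
  obtain ⟨τ, hτ, hτx⟩ := hdense x
  exact ⟨τ, hEE' hτ, hτx⟩

theorem LevitanNAP.of_almostPeriodSet_subset {n : ℕ} {X Y : Type*} [NormedAddCommGroup X]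
    [NormedAddCommGroup Y] {F : EuclideanSpace ℝ (Fin n) → X} {G : EuclideanSpace ℝ (Fin n) → Y}
    (hF : LevitanNAP F) {C : ℝ} (hG : ∀ t, ‖G t‖ ≤ C)
    (hFG : ∀ ε > 0, ∀ N > 0, ∃ δ > 0, ∃ M > 0,
      AlmostPeriodSet F δ M ⊆ AlmostPeriodSet G ε N) :
    LevitanNAP G := by
  refine ⟨fun ε hε N hN => ?_, fun N hN ε hε => ?_⟩
  · obtain ⟨δ, hδ, M, hM, hsub⟩ := hFG ε hε N hN
    exact (hF.1 δ hδ M hM).mono hsub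
  · obtain ⟨δ, hδ, M, hM, hsub⟩ := hFG ε hε N hN
    obtain ⟨-, -, E, hE, -, hsum⟩ := hF.2 M hM δ hδ
    have hC : 0 ≤ C := (norm_nonneg _).trans (hG 0)
    refine ⟨2 * C + 1, by positivity, E, hE, fun τ _ => ?_, fun a ha b hb => ?_⟩
    · exact AlmostPeriodSet.mono (by linarith) (mem_almostPeriodSet_of_norm_le hG N τ)
    · exact ⟨hsub (hsum a ha b hb).1, hsub (hsum a ha b hb).2⟩

theorem tendsto_setIntegral_compl_closedBall {α E : Type*} [PseudoMetricSpace α]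
    [MeasurableSpace α] [OpensMeasurableSpace α] [NormedAddCommGroup E] [NormedSpace ℝ E]
    {μ : Measure α} {g : α → E} (hg : Integrable g μ) (x : α) :
    Tendsto (fun R : ℝ => ∫ u in (closedBall x R)ᶜ, g u ∂μ) atTop (𝓝 0) := by
  have hempty : ⋂ R : ℝ, (closedBall x R)ᶜ = ∅ := by
    rw [← Set.compl_iUnion, Set.compl_empty_iff]
    exact Set.eq_univ_of_forall fun y => Set.mem_iUnion.2 ⟨dist y x, mem_closedBall.2 le_rfl⟩
  have := tendsto_setIntegral_of_antitone (s := fun R : ℝ => (closedBall x R)ᶜ)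
    (fun R => measurableSet_closedBall.compl)
    (fun R R' hRR' => Set.compl_subset_compl.2 (closedBall_subset_closedBall hRR'))
    ⟨0, hg.integrableOn⟩
  rwa [hempty, Measure.restrict_empty, integral_zero_measure] at this

section Convolution

variable {n : ℕ} {𝕜 X : Type*} [NontriviallyNormedField 𝕜] [NormedAddCommGroup X]
  [NormedSpace 𝕜 X] {μ : Measure (EuclideanSpace ℝ (Fin n))}
  {f : EuclideanSpace ℝ (Fin n) → X} {h : EuclideanSpace ℝ (Fin n) → 𝕜} {C : ℝ}

theorem integrable_smul_comp_sub (hfc : Continuous f) (hfC : ∀ s, ‖f s‖ ≤ C)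
    (hh : Integrable h μ) (t : EuclideanSpace ℝ (Fin n)) :
    Integrable (fun u => h u • f (t - u)) μ := by
  refine (hh.norm.mul_const C).mono'
    (hh.aestronglyMeasurable.smul (hfc.comp (continuous_sub_left t)).aestronglyMeasurable)
    (Eventually.of_forall fun u => ?_)
  rw [norm_smul]
  exact mul_le_mul_of_nonneg_left (hfC _) (norm_nonneg _)

variable [NormedSpace ℝ X]

theorem norm_convolution_lsmul_le (hfC : ∀ s, ‖f s‖ ≤ C) (hh : Integrable h μ)
    (t : EuclideanSpace ℝ (Fin n)) :
    ‖(h ⋆[lsmul 𝕜 𝕜, μ] f) t‖ ≤ (∫ u, ‖h u‖ ∂μ) * C := by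
  rw [convolution_lsmul, ← integral_mul_const]
  refine norm_integral_le_of_norm_le (hh.norm.mul_const C) (Eventually.of_forall fun u => ?_)
  rw [norm_smul]
  exact mul_le_mul_of_nonneg_left (hfC _) (norm_nonneg _)

theorem convolution_mem_almostPeriodSet (hfc : Continuous f) (hfC : ∀ s, ‖f s‖ ≤ C)
    (hh : Integrable h μ) {η N R : ℝ} (hη : 0 ≤ η) {τ : EuclideanSpace ℝ (Fin n)}
    (hτ : τ ∈ AlmostPeriodSet f η (N + R)) :
    τ ∈ AlmostPeriodSet (h ⋆[lsmul 𝕜 𝕜, μ] f)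
      (η * ∫ u, ‖h u‖ ∂μ + 2 * C * ∫ u in (closedBall 0 R)ᶜ, ‖h u‖ ∂μ) N := by
  intro t ht
  set B := closedBall (0 : EuclideanSpace ℝ (Fin n)) R
  set D := fun u => h u • f (t + τ - u) - h u • f (t - u)
  have hD : Integrable (fun u => ‖D u‖) μ :=
    ((integrable_smul_comp_sub hfc hfC hh _).sub (integrable_smul_comp_sub hfc hfC hh _)).norm
  have hD_eq : ∀ u, ‖D u‖ = ‖h u‖ * ‖f (t - u + τ) - f (t - u)‖ := fun u => by
    simp only [D, ← smul_sub, norm_smul, add_sub_right_comm]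
  have hnear : ∀ u ∈ B, ‖D u‖ ≤ η * ‖h u‖ := fun u hu => by
    have htu : ‖t - u‖ ≤ N + R :=
      (norm_sub_le t u).trans (add_le_add ht (mem_closedBall_zero_iff.1 hu))
    rw [hD_eq, mul_comm η]
    exact mul_le_mul_of_nonneg_left (hτ _ htu) (norm_nonneg _)
  have hfar : ∀ u, ‖D u‖ ≤ 2 * C * ‖h u‖ := fun u => by
    rw [hD_eq, mul_comm (2 * C)]
    exact mul_le_mul_of_nonneg_left
      ((norm_sub_le _ _).trans (by linarith [hfC (t - u + τ), hfC (t - u)])) (norm_nonneg _)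
  calc ‖(h ⋆[lsmul 𝕜 𝕜, μ] f) (t + τ) - (h ⋆[lsmul 𝕜 𝕜, μ] f) t‖
      = ‖∫ u, D u ∂μ‖ := by
        rw [convolution_lsmul, convolution_lsmul,
          integral_sub (integrable_smul_comp_sub hfc hfC hh _)
            (integrable_smul_comp_sub hfc hfC hh _)]
    _ ≤ ∫ u, ‖D u‖ ∂μ := norm_integral_le_integral_norm _
    _ = ∫ u in B, ‖D u‖ ∂μ + ∫ u in Bᶜ, ‖D u‖ ∂μ :=
        (integral_add_compl measurableSet_closedBall hD).symm
    _ ≤ ∫ u in B, η * ‖h u‖ ∂μ + ∫ u in Bᶜ, 2 * C * ‖h u‖ ∂μ := by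
        refine add_le_add ?_ ?_
        · exact setIntegral_mono_on hD.integrableOn (hh.norm.const_mul η).integrableOn
            measurableSet_closedBall hnear
        · exact setIntegral_mono hD.integrableOn (hh.norm.const_mul _).integrableOn hfar
    _ ≤ η * ∫ u, ‖h u‖ ∂μ + 2 * C * ∫ u in Bᶜ, ‖h u‖ ∂μ := by
        rw [integral_const_mul, integral_const_mul]
        gcongr ?_ + _
        exact mul_le_mul_of_nonneg_left
          (setIntegral_le_integral hh.norm (.of_forall fun u => norm_nonneg _)) hη

theorem exists_almostPeriodSet_subset_convolution (hfc : Continuous f)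
    (hfC : ∀ s, ‖f s‖ ≤ C) (hh : Integrable h μ) (ε : ℝ) (hε : 0 < ε) (N : ℝ) (hN : 0 < N) :
    ∃ δ > 0, ∃ M > 0, AlmostPeriodSet f δ M ⊆ AlmostPeriodSet (h ⋆[lsmul 𝕜 𝕜, μ] f) ε N := by
  have hI : 0 ≤ ∫ u, ‖h u‖ ∂μ := integral_nonneg fun _ => norm_nonneg _
  have htail := ((tendsto_setIntegral_compl_closedBall hh.norm 0).const_mul (2 * C)).eventually
    (eventually_lt_nhds (b := ε / 2) (by rw [mul_zero]; exact half_pos hε))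
  obtain ⟨R, hR, hRtail⟩ := ((eventually_ge_atTop 0).and htail).exists
  set η := ε / (2 * (∫ u, ‖h u‖ ∂μ + 1))
  have hηI : η * ∫ u, ‖h u‖ ∂μ ≤ ε / 2 := by
    rw [div_mul_eq_mul_div, div_le_div_iff₀ (by positivity) two_pos]
    nlinarith
  refine ⟨η, by positivity, N + R, by positivity, fun τ hτ => ?_⟩
  refine AlmostPeriodSet.mono ?_ (convolution_mem_almostPeriodSet hfc hfC hh (by positivity) hτ)
  linarith

end Convolution

theorem stmt7_general {X : Type*} [NormedAddCommGroup X] [NormedSpace ℂ X]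
    (n : ℕ) (f : EuclideanSpace ℝ (Fin n) → X) (hfc : Continuous f)
    (hfb : ∃ C, ∀ s, ‖f s‖ ≤ C) (hfap : LevitanNAP f)
    (h : EuclideanSpace ℝ (Fin n) → ℂ) (hh : Integrable h) :
    (∃ C, ∀ t, ‖∫ s, h (t - s) • f s‖ ≤ C) ∧
    Continuous (fun t => ∫ s, h (t - s) • f s) ∧
    LevitanNAP (fun t => ∫ s, h (t - s) • f s) := by
  obtain ⟨C, hfC⟩ := hfb
  have hconv : ∀ t, ∫ s, h (t - s) • f s = (h ⋆[lsmul ℂ ℂ] f) t :=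
    fun _ => convolution_lsmul_swap.symm
  have hbound := norm_convolution_lsmul_le hfC hh
  simp only [hconv]
  exact ⟨⟨_, hbound⟩,
    BddAbove.continuous_convolution_right_of_integrable _ ⟨C, Set.forall_mem_range.2 hfC⟩ hh hfc,
    hfap.of_almostPeriodSet_subset hbound (exists_almostPeriodSet_subset_convolution hfc hfC hh)⟩

/-- Convolution with an `L¹(ℝⁿ)` kernel preserves bounded, continuous, Levitan
`N`-almost periodic functions. -/
theorem stmt7 {X : Type*} [NormedAddCommGroup X] [NormedSpace ℂ X] [CompleteSpace X]
    (n : ℕ) (f : EuclideanSpace ℝ (Fin n) → X) (hfc : Continuous f)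
    (hfb : ∃ C, ∀ s, ‖f s‖ ≤ C) (hfap : LevitanNAP f)
    (h : EuclideanSpace ℝ (Fin n) → ℂ) (hh : Integrable h) :
    (∃ C, ∀ t, ‖∫ s, h (t - s) • f s‖ ≤ C) ∧
    Continuous (fun t => ∫ s, h (t - s) • f s) ∧
    LevitanNAP (fun t => ∫ s, h (t - s) • f s) :=
  stmt7_general n f hfc hfb hfap h hh
end

section
/- Let n ≥ 2, let A = ℤⁿ (so that A − A + A − A = ℤⁿ), and let 0 < δ < 1/4. Then for every η > 0 and every ω ∈ ℝⁿ, the set W := {τ ∈ ℝⁿ : |e^{i ω·τ} − 1| < η} is not contained in ℤⁿ + B_δ, where B_δ is the closed ball of radius δ centered at 0 and ω·τ denotes the Euclidean inner product. In particular, the Bogolyubov-type statement (S) — that for every relatively dense set A ⊆ ℝⁿ and δ > 0 there exist η > 0 and finitely many ω₁,…,ω_k ∈ ℝⁿ with {τ : |e^{iω_l·τ}−1| < η for all l} ⊆ A − A + A − A + B_δ — fails for A = ℤⁿ when n ≥ 2 with a single frequency (k = 1). -/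
open Real Filter Topology

/-!
In dimension at least two the frequency `ω` has a nonzero orthogonal vector. Scaled so that
one coordinate equals `1/2`, it lies in `W` because `e^{i ω·τ} = 1`, yet every point of `ℤⁿ`
differs from it by at least `1/2` in that coordinate, hence is at distance at least `1/2 > δ`.
-/

theorem exists_ne_zero_inner_eq_zero {E : Type*} [NormedAddCommGroup E] [InnerProductSpace ℝ E]
    [FiniteDimensional ℝ E] (hE : 1 < Module.finrank ℝ E) (ω : E) :
    ∃ τ : E, τ ≠ 0 ∧ inner ℝ ω τ = 0 := by
  have hker : LinearMap.ker ((innerSL ℝ ω : E →L[ℝ] ℝ) : E →ₗ[ℝ] ℝ) ≠ ⊥ :=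
    LinearMap.ker_ne_bot_of_finrank_lt (by rwa [Module.finrank_self])
  obtain ⟨τ, hτ, hτ0⟩ := Submodule.exists_mem_ne_zero_of_ne_bot hker
  exact ⟨τ, hτ0, by simpa using hτ⟩

theorem EuclideanSpace.exists_inner_eq_zero_apply_eq_half {n : ℕ} (hn : 2 ≤ n)
    (ω : EuclideanSpace ℝ (Fin n)) :
    ∃ (τ : EuclideanSpace ℝ (Fin n)) (j : Fin n), inner ℝ ω τ = 0 ∧ τ j = 1 / 2 := by
  obtain ⟨τ, hτ0, hωτ⟩ :=
    exists_ne_zero_inner_eq_zero (by rw [finrank_euclideanSpace_fin]; omega) ω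
  obtain ⟨j, hj⟩ : ∃ j, τ j ≠ 0 := by
    by_contra! h
    exact hτ0 (PiLp.ext h)
  refine ⟨(2 * τ j)⁻¹ • τ, j, by rw [real_inner_smul_right, hωτ, mul_zero], ?_⟩
  rw [PiLp.smul_apply, smul_eq_mul]
  field_simp

theorem half_le_abs_half_sub_intCast (z : ℤ) : 1 / 2 ≤ |1 / 2 - (z : ℝ)| := by
  rcases le_or_gt z 0 with hz | hz
  · have : (z : ℝ) ≤ 0 := by exact_mod_cast hz
    rw [abs_of_pos (by linarith)]
    linarith
  · have : (1 : ℝ) ≤ z := by exact_mod_cast hz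
    rw [abs_of_neg (by linarith)]
    linarith

theorem EuclideanSpace.half_le_norm_sub_of_apply_eq_half {ι : Type*} [Fintype ι]
    {x m : EuclideanSpace ℝ ι} {j : ι} (hx : x j = 1 / 2) {z : ℤ} (hm : m j = z) :
    1 / 2 ≤ ‖x - m‖ :=
  calc 1 / 2 ≤ |1 / 2 - (z : ℝ)| := half_le_abs_half_sub_intCast z
    _ = ‖(x - m) j‖ := by rw [PiLp.sub_apply, hx, hm, Real.norm_eq_abs]
    _ ≤ ‖x - m‖ := PiLp.norm_apply_le _ j

theorem stmt11_general (n : ℕ) (hn : 2 ≤ n) (δ : ℝ) (hδ : δ < 1 / 4)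
    (η : ℝ) (hη : 0 < η) (ω : EuclideanSpace ℝ (Fin n)) :
    ¬ ({τ : EuclideanSpace ℝ (Fin n) |
          ‖Complex.exp (Complex.I * ((inner ℝ ω τ : ℝ) : ℂ)) - 1‖ < η} ⊆
        {x : EuclideanSpace ℝ (Fin n) |
          ∃ m : EuclideanSpace ℝ (Fin n), (∀ j, ∃ z : ℤ, m j = z) ∧ ‖x - m‖ ≤ δ}) := by
  intro hsub
  obtain ⟨τ, j, hωτ, hτj⟩ := EuclideanSpace.exists_inner_eq_zero_apply_eq_half hn ω
  have hτW : ‖Complex.exp (Complex.I * ((inner ℝ ω τ : ℝ) : ℂ)) - 1‖ < η := by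
    simpa [hωτ] using hη
  obtain ⟨m, hm, hτm⟩ := hsub hτW
  obtain ⟨z, hz⟩ := hm j
  have := EuclideanSpace.half_le_norm_sub_of_apply_eq_half hτj hz
  linarith

/-- Failure of the Bogolyubov-type statement (S) in dimension `n ≥ 2` for `A = ℤⁿ`:
for every `η > 0` and every single frequency `ω ∈ ℝⁿ`, the set
`W = {τ : |e^{i ω·τ} − 1| < η}` is not contained in `ℤⁿ + B_δ` whenever `0 < δ < 1/4`. -/
theorem stmt11 (n : ℕ) (hn : 2 ≤ n) (δ : ℝ) (hδ0 : 0 < δ) (hδ : δ < 1 / 4)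
    (η : ℝ) (hη : 0 < η) (ω : EuclideanSpace ℝ (Fin n)) :
    ¬ ({τ : EuclideanSpace ℝ (Fin n) |
          ‖Complex.exp (Complex.I * ((inner ℝ ω τ : ℝ) : ℂ)) - 1‖ < η} ⊆
        {x : EuclideanSpace ℝ (Fin n) |
          ∃ m : EuclideanSpace ℝ (Fin n), (∀ j, ∃ z : ℤ, m j = z) ∧ ‖x - m‖ ≤ δ}) :=
  stmt11_general n hn δ hδ η hη ω
end

section
/- Supremum formula for uniformly Poisson stable functions: let X be a complex Banach space and F : ℝⁿ → X continuous. Suppose there exists a sequence (τ_k) in ℝⁿ with |τ_k| → +∞ such that F(·+τ_k) → F(·) uniformly on compact subsets of ℝⁿ. Then for every a > 0 one has sup_{t∈ℝⁿ} ‖F(t)‖ = sup_{t∈ℝⁿ, |t|≥a} ‖F(t)‖, with both suprema taken in [0,∞]. -/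
open Filter Topology ENNReal

/-- Supremum formula for uniformly Poisson stable functions: if `F : ℝⁿ → X` is
continuous and `F(· + τ_k) → F` uniformly on compact sets for some sequence with
`‖τ_k‖ → ∞`, then for every `a > 0` the supremum of `‖F‖` over `ℝⁿ` equals the
supremum over `{t : ‖t‖ ≥ a}` (both computed in `[0, ∞]`). -/
theorem stmt12 {X : Type*} [NormedAddCommGroup X] (n : ℕ)
    (F : EuclideanSpace ℝ (Fin n) → X) (hF : Continuous F)
    (τ : ℕ → EuclideanSpace ℝ (Fin n)) (hτ : Tendsto (fun k => ‖τ k‖) atTop atTop)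
    (hrec : ∀ K : Set (EuclideanSpace ℝ (Fin n)), IsCompact K →
      TendstoUniformlyOn (fun k t => F (t + τ k)) F atTop K)
    (a : ℝ) (ha : 0 < a) :
    ⨆ t : EuclideanSpace ℝ (Fin n), (‖F t‖₊ : ℝ≥0∞) =
      ⨆ t ∈ {t : EuclideanSpace ℝ (Fin n) | a ≤ ‖t‖}, (‖F t‖₊ : ℝ≥0∞) := by
  refine le_antisymm (iSup_le fun t => ?_) (iSup₂_le fun t _ => le_iSup (fun s => (‖F s‖₊ : ℝ≥0∞)) t)
  have h1 : Tendsto (fun k => F (t + τ k)) atTop (𝓝 (F t)) :=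
    (hrec {t} isCompact_singleton).tendsto_at (Set.mem_singleton t)
  have h2 : Tendsto (fun k => (‖F (t + τ k)‖₊ : ℝ≥0∞)) atTop (𝓝 (‖F t‖₊ : ℝ≥0∞)) :=
    ENNReal.tendsto_coe.mpr h1.nnnorm
  refine le_of_tendsto h2 ?_
  have h3 : ∀ᶠ k in atTop, a + ‖t‖ ≤ ‖τ k‖ := hτ.eventually_ge_atTop _
  filter_upwards [h3] with k hk
  have hge : a ≤ ‖t + τ k‖ := by
    have h4 : ‖τ k‖ = ‖(t + τ k) - t‖ := by rw [add_sub_cancel_left]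
    have h5 := norm_sub_le (t + τ k) t
    rw [h4] at hk
    linarith
  exact le_iSup₂ (f := fun s (_ : a ≤ ‖s‖) => (‖F s‖₊ : ℝ≥0∞)) (t + τ k) hge
end
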